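/- arXiv:1208.5604 — 2 statements merged into one kernel-verified Lean document; each statement's English description precedes it below -/
import Mathlib

section
/- Let G = (V, E) be a finite DAG and let s be a vertex with no incoming edges such that every vertex other than s has at least one incoming edge. Let a : E → ℝ be prescribed target values such that for every vertex v ≠ s that has at least one outgoing edge, Σ_{e ∈ inc(v)} a(e) ≠ 0. Then there exists a unique weight function W : E → ℝ such that the edge path-sum α_e(W) equals a(e) for every edge e ∈ E. -/
/-- `IsPathFrom tail head u v p` means the list of edges `p` is a directed path
from vertex `u` to vertex `v`. The empty path goes from `u` to `u`. -/
def IsPathFrom {V E : Type} (tail head : E → V) : V → V → List E → Prop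
  | u, v, [] => u = v
  | u, v, e :: es => tail e = u ∧ IsPathFrom tail head (head e) v es

/-- A directed graph is acyclic if the only directed path from a vertex to itself
is the empty path. -/
def Acyclic {V E : Type} (tail head : E → V) : Prop :=
  ∀ (v : V) (p : List E), IsPathFrom tail head v v p → p = []

/-- The weight of a path is the product of the weights of its edges. -/
def pathWeight {E : Type} (W : E → ℝ) (p : List E) : ℝ := (p.map W).prod

/-- The edge path-sum `α_e(W)`: the sum of the weights of all directed paths
starting at the source `s` whose last edge is `e`. -/
noncomputable def edgeAlpha {V E : Type} (tail head : E → V) (W : E → ℝ) (s : V) (e : E) : ℝ :=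
  ∑ᶠ p ∈ {p : List E | IsPathFrom tail head s (head e) p ∧ p.getLast? = some e},
    pathWeight W p

/-!
Write `β_v(W)` for the sum of the weights of all paths from `s` to `v`. Every path ending in
the edge `e` is a path to `tail e` followed by `e`, so `α_e(W) = W e * β_{tail e}(W)`; and
`β_s = 1`, while `β_v = ∑_{e ∈ inc(v)} α_e` for `v ≠ s`. Hence, once `α = a` on all edges
before `e`, the equation `α_e(W) = a e` reads `W e * b (tail e) = a e`, where `b v` is `1` at
the source and `∑_{e ∈ inc(v)} a e` elsewhere, and `b (tail e) ≠ 0` by hypothesis. Since the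
graph is a finite DAG, "`e'` enters the tail of `e`" is well founded, and induction along it
shows that `W e = a e / b (tail e)` is the one and only solution.
-/

open Set

variable {V E : Type} {tail head : E → V}

@[simp]
lemma isPathFrom_nil {u v : V} : IsPathFrom tail head u v [] ↔ u = v := Iff.rfl

@[simp]
lemma isPathFrom_cons {u v : V} {e : E} {p : List E} :
    IsPathFrom tail head u v (e :: p) ↔ tail e = u ∧ IsPathFrom tail head (head e) v p :=
  Iff.rfl

lemma isPathFrom_append {u v : V} {p q : List E} :
    IsPathFrom tail head u v (p ++ q) ↔
      ∃ w, IsPathFrom tail head u w p ∧ IsPathFrom tail head w v q := by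
  induction p generalizing u with
  | nil => simp
  | cons e p ih => simp [ih, and_assoc]

lemma isPathFrom_concat {u v : V} {p : List E} {e : E} :
    IsPathFrom tail head u v (p ++ [e]) ↔ IsPathFrom tail head u (tail e) p ∧ head e = v := by
  simp [isPathFrom_append, eq_comm]

lemma IsPathFrom.nodup (hacyc : Acyclic tail head) {u v : V} {p : List E}
    (hp : IsPathFrom tail head u v p) : p.Nodup := by
  induction p generalizing u with
  | nil => exact List.nodup_nil
  | cons e p ih =>
    refine List.nodup_cons.mpr ⟨fun he => ?_, ih hp.2⟩
    obtain ⟨p₁, p₂, rfl⟩ := List.append_of_mem he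
    obtain ⟨w, hp₁, hw, -⟩ := isPathFrom_append.mp hp.2
    have hcycle : IsPathFrom tail head (head e) (head e) (p₁ ++ [e]) :=
      isPathFrom_concat.mpr ⟨hw ▸ hp₁, rfl⟩
    simpa using hacyc _ _ hcycle

lemma finite_setOf_isPathFrom [Finite E] (hacyc : Acyclic tail head) (u v : V) :
    {p : List E | IsPathFrom tail head u v p}.Finite := by
  have := Fintype.ofFinite E
  exact (List.finite_length_le E (Fintype.card E)).subset fun p hp =>
    (hp.nodup hacyc).length_le_card

lemma wellFounded_head_eq_tail [Finite E] (hacyc : Acyclic tail head) :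
    WellFounded fun e' e : E => head e' = tail e := by
  let r := fun e' e : E => head e' = tail e
  have hpath : ∀ e' e, Relation.TransGen r e' e →
      ∃ p, IsPathFrom tail head (head e') (tail e) p := by
    intro e' e h
    induction h with
    | single h => exact ⟨[], h⟩
    | @tail e₁ e₂ _ h ih =>
      obtain ⟨p, hp⟩ := ih
      exact ⟨p ++ [e₁], isPathFrom_concat.mpr ⟨hp, h⟩⟩
  have : IsTrans E (Relation.TransGen r) := ⟨fun _ _ _ => Relation.TransGen.trans⟩
  have : Std.Irrefl (Relation.TransGen r) := ⟨fun e h => by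
    obtain ⟨p, hp⟩ := hpath e e h
    simpa using hacyc _ _ (isPathFrom_concat.mpr ⟨hp, rfl⟩)⟩
  exact (Finite.wellFounded_of_trans_of_irrefl (Relation.TransGen r)).mono
    fun _ _ => Relation.TransGen.single (r := r)

noncomputable def vertexAlpha (tail head : E → V) (W : E → ℝ) (s v : V) : ℝ :=
  ∑ᶠ p ∈ {p : List E | IsPathFrom tail head s v p}, pathWeight W p

lemma setOf_isPathFrom_getLast?_eq (s : V) (e : E) :
    {p : List E | IsPathFrom tail head s (head e) p ∧ p.getLast? = some e} =
      (· ++ [e]) '' {q : List E | IsPathFrom tail head s (tail e) q} := by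
  ext p
  constructor
  · rintro ⟨hp, hlast⟩
    obtain ⟨q, rfl⟩ := List.getLast?_eq_some_iff.mp hlast
    exact ⟨q, (isPathFrom_concat.mp hp).1, rfl⟩
  · rintro ⟨q, hq, rfl⟩
    exact ⟨isPathFrom_concat.mpr ⟨hq, rfl⟩, List.getLast?_concat⟩

lemma edgeAlpha_eq_mul_vertexAlpha (W : E → ℝ) (s : V) (e : E) :
    edgeAlpha tail head W s e = W e * vertexAlpha tail head W s (tail e) := by
  rw [edgeAlpha, setOf_isPathFrom_getLast?_eq,
    finsum_mem_image fun _ _ _ _ => List.append_cancel_right, vertexAlpha, mul_finsum_mem]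
  simp [pathWeight, mul_comm]

lemma vertexAlpha_self (W : E → ℝ) {s : V} (hs : ∀ e : E, head e ≠ s) :
    vertexAlpha tail head W s s = 1 := by
  have hpaths : {p : List E | IsPathFrom tail head s s p} = {[]} := by
    refine eq_singleton_iff_unique_mem.mpr ⟨rfl, fun p hp => ?_⟩
    rcases p.eq_nil_or_concat' with rfl | ⟨q, e, rfl⟩
    · rfl
    · exact absurd (isPathFrom_concat.mp hp).2 (hs e)
  rw [vertexAlpha, hpaths, finsum_mem_singleton]
  rfl

lemma setOf_isPathFrom_eq_biUnion {s v : V} (hv : v ≠ s) :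
    {p : List E | IsPathFrom tail head s v p} =
      ⋃ e ∈ {e : E | head e = v},
        {p : List E | IsPathFrom tail head s (head e) p ∧ p.getLast? = some e} := by
  ext p
  simp only [mem_ofPred_eq, mem_iUnion, exists_prop]
  constructor
  · intro hp
    rcases p.eq_nil_or_concat' with rfl | ⟨q, e, rfl⟩
    · exact absurd hp.symm hv
    · have he := (isPathFrom_concat.mp hp).2
      exact ⟨e, he, he ▸ hp, List.getLast?_concat⟩
  · rintro ⟨e, rfl, hp, -⟩
    exact hp

lemma vertexAlpha_eq_finsum_edgeAlpha [Finite E] (hacyc : Acyclic tail head) (W : E → ℝ)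
    {s v : V} (hv : v ≠ s) :
    vertexAlpha tail head W s v = ∑ᶠ e ∈ {e : E | head e = v}, edgeAlpha tail head W s e := by
  have hdisj : {e : E | head e = v}.PairwiseDisjoint fun e =>
      {p : List E | IsPathFrom tail head s (head e) p ∧ p.getLast? = some e} := by
    intro e₁ _ e₂ _ hne
    refine disjoint_left.mpr fun p hp₁ hp₂ => hne ?_
    exact Option.some.inj (hp₁.2.symm.trans hp₂.2)
  rw [vertexAlpha, setOf_isPathFrom_eq_biUnion hv,
    finsum_mem_biUnion hdisj (toFinite _) fun e _ =>
      (finite_setOf_isPathFrom hacyc s (head e)).subset fun _ hp => hp.1]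
  rfl

open Classical in
/-- The value that `vertexAlpha W s v` is forced to take once `edgeAlpha W s = a` on every
edge entering `v`. -/
noncomputable def targetVertexAlpha (head : E → V) (a : E → ℝ) (s v : V) : ℝ :=
  if v = s then 1 else ∑ᶠ e ∈ {e : E | head e = v}, a e

lemma edgeAlpha_eq_mul_targetVertexAlpha [Finite E] (hacyc : Acyclic tail head) {s : V}
    (hs : ∀ e : E, head e ≠ s) {W a : E → ℝ} {e : E}
    (hpred : ∀ e' : E, head e' = tail e → edgeAlpha tail head W s e' = a e') :
    edgeAlpha tail head W s e = W e * targetVertexAlpha head a s (tail e) := by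
  rw [edgeAlpha_eq_mul_vertexAlpha, targetVertexAlpha]
  split_ifs with h
  · rw [h, vertexAlpha_self W hs]
  · rw [vertexAlpha_eq_finsum_edgeAlpha hacyc W h]
    exact congrArg _ (finsum_mem_congr rfl hpred)

theorem exists_unique_weights_realizing_edgeAlpha_general {V E : Type} [Fintype E]
    (tail head : E → V) (hacyc : Acyclic tail head)
    (s : V) (hs : ∀ e : E, head e ≠ s)
    (a : E → ℝ)
    (ha : ∀ v : V, v ≠ s → (∃ e : E, tail e = v) →
      (∑ᶠ e ∈ {e : E | head e = v}, a e) ≠ 0) :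
    ∃! W : E → ℝ, ∀ e : E, edgeAlpha tail head W s e = a e := by
  have hb : ∀ e, targetVertexAlpha head a s (tail e) ≠ 0 := fun e => by
    unfold targetVertexAlpha
    split_ifs with h
    · exact one_ne_zero
    · exact ha _ h ⟨e, rfl⟩
  refine ⟨fun e => a e / targetVertexAlpha head a s (tail e), fun e => ?_,
    fun W hW => funext fun e => ?_⟩
  · induction e using (wellFounded_head_eq_tail hacyc).induction with
    | _ e ih => rw [edgeAlpha_eq_mul_targetVertexAlpha hacyc hs ih, div_mul_cancel₀ _ (hb e)]
  · rw [eq_div_iff (hb e), ← hW e, edgeAlpha_eq_mul_targetVertexAlpha hacyc hs fun e' _ => hW e']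

/-- Let `G = (V, E)` be a finite DAG and `s` a vertex with no incoming edges such that
every other vertex has at least one incoming edge. Given target values `a : E → ℝ`
such that for every vertex `v ≠ s` with at least one outgoing edge the sum of `a`
over the incoming edges of `v` is nonzero, there exists a unique weight function
`W : E → ℝ` realizing `α_e(W) = a(e)` for every edge `e`. -/
theorem exists_unique_weights_realizing_edgeAlpha {V E : Type} [Fintype V] [Fintype E]
    (tail head : E → V) (hacyc : Acyclic tail head)
    (s : V) (hs : ∀ e : E, head e ≠ s)
    (hin : ∀ v : V, v ≠ s → ∃ e : E, head e = v)
    (a : E → ℝ)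
    (ha : ∀ v : V, v ≠ s → (∃ e : E, tail e = v) →
      (∑ᶠ e ∈ {e : E | head e = v}, a e) ≠ 0) :
    ∃! W : E → ℝ, ∀ e : E, edgeAlpha tail head W s e = a e :=
  exists_unique_weights_realizing_edgeAlpha_general tail head hacyc s hs a ha
end

section
/- Let E be a finite nonempty index set, let a : E → ℝ be strictly positive, let Δ > 0, U > 0, δ > 0 be reals, set c = 2U/δ, let R̄ be a real number such that B := R̄·Δ is an integer, and set κ = 2^B / c. Then for every e ∈ E: Δ⁻¹·⌈log₂( c · a(e) / min_{ē ∈ E} a(ē) )⌉ ≤ R̄ if and only if a(e) − κ·a(ē) ≤ 0 for all ē ∈ E. -/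
/-! Because `B = R̄·Δ` is an integer, the ceiling can be dropped: `⌈log₂ x⌉ ≤ B ↔ x ≤ 2^B`.
What remains is `a(e) ≤ κ · min a`, and since `κ > 0` a bound by `κ` times the minimum is
a bound by `κ · a(ē)` for every `ē`. -/

theorem Real.ceil_logb_le_iff_le_zpow {b x : ℝ} (hb : 1 < b) (hx : 0 < x) (n : ℤ) :
    ⌈Real.logb b x⌉ ≤ n ↔ x ≤ b ^ n := by
  rw [Int.ceil_le, Real.logb_le_iff_le_rpow hb hx, Real.rpow_intCast]

theorem Finset.le_mul_inf'_iff {ι α : Type*}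
    [Field α] [LinearOrder α] [IsStrictOrderedRing α] {s : Finset ι} (H : s.Nonempty)
    (f : ι → α) {κ x : α} (hκ : 0 < κ) : x ≤ κ * s.inf' H f ↔ ∀ i ∈ s, x ≤ κ * f i := by
  simp_rw [← div_le_iff₀' hκ, Finset.le_inf'_iff]

/-- Equivalence chain in the proof of the paper's Proposition 4: the data-rate
constraint `Δ⁻¹·⌈log₂(c·a(e)/min_{e'} a(e'))⌉ ≤ R̄` (with `c = 2U/δ`, `B = R̄·Δ` an
integer, and `κ = 2^B/c`) holds if and only if `a(e) - κ·a(e') ≤ 0` for all `e'`. -/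
theorem dataRate_constraint_iff_linear {E : Type} [Fintype E] [Nonempty E]
    (a : E → ℝ) (ha : ∀ e : E, 0 < a e)
    (Δ U δ R : ℝ) (hΔ : 0 < Δ) (hU : 0 < U) (hδ : 0 < δ)
    (c : ℝ) (hc : c = 2 * U / δ)
    (B : ℤ) (hB : (B : ℝ) = R * Δ)
    (κ : ℝ) (hκ : κ = (2 : ℝ) ^ B / c) :
    ∀ e : E,
      (Δ⁻¹ * (⌈Real.logb 2 (c * a e / Finset.univ.inf' Finset.univ_nonempty a)⌉ : ℝ) ≤ R
        ↔ ∀ e' : E, a e - κ * a e' ≤ 0) := by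
  intro e
  set m := Finset.univ.inf' Finset.univ_nonempty a
  have hc0 : 0 < c := hc ▸ by positivity
  have hm0 : 0 < m := (Finset.lt_inf'_iff _).mpr fun i _ ↦ ha i
  have hκ0 : 0 < κ := hκ ▸ by positivity
  calc Δ⁻¹ * (⌈Real.logb 2 (c * a e / m)⌉ : ℝ) ≤ R
      ↔ ⌈Real.logb 2 (c * a e / m)⌉ ≤ B := by
        rw [inv_mul_le_iff₀ hΔ, mul_comm Δ, ← hB, Int.cast_le]
    _ ↔ c * a e / m ≤ 2 ^ B :=
        Real.ceil_logb_le_iff_le_zpow one_lt_two (by have := ha e; positivity) B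
    _ ↔ a e ≤ κ * m := by
        rw [div_le_iff₀ hm0, hκ, div_mul_eq_mul_div, le_div_iff₀' hc0]
    _ ↔ ∀ e' : E, a e - κ * a e' ≤ 0 :=
        (Finset.le_mul_inf'_iff _ a hκ0).trans <| by
          simp only [Finset.mem_univ, true_imp_iff, sub_nonpos]
end
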